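/- Let (u,v) be a mutually abelian-bordered pair of binary words with |u| = |v| = n ≥ 3, i = lsb(u,v), j = lsb(v,u), and i + j > n, and let u = αγβ, v = β'γ'α' be a decomposition into nonempty binary words with αγ ~ γ'α', γβ ~ β'γ', |αγ| = j, |γβ| = i, and (γβ, β'γ') and (αγ, γ'α') both mutually abelian-unbordered. Then the following are equivalent: (1) ||α|_c − |α'|_c| = 1 for every letter c ∈ {a,b}; (2) ||β|_c − |β'|_c| = 1 for every letter c ∈ {a,b}; (3) i + j − n = 1. -/

import Mathlib

/-- Abelian equivalence of binary words; the alphabet `{a, b}` is encoded by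
`Bool` with `a = true` and `b = false`. -/
def AbEq (x y : List Bool) : Prop :=
  x.count true = y.count true ∧ x.count false = y.count false

/-- `(x, y)` is an internal abelian-border of `(u, v)`: `x` is a nonempty proper
suffix of `u`, `y` is a proper prefix of `v`, and `x ~ y`. -/
def IsIntBorder (u v x y : List Bool) : Prop :=
  x ≠ [] ∧ x ≠ u ∧ x <:+ u ∧ y <+: v ∧ y ≠ v ∧ AbEq x y

/-- `(x, y)` is an external abelian-border of `(u, v)`: `x` is a nonempty proper
prefix of `u`, `y` is a proper suffix of `v`, and `x ~ y`. -/
def IsExtBorder (u v x y : List Bool) : Prop :=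
  x ≠ [] ∧ x ≠ u ∧ x <+: u ∧ y <:+ v ∧ y ≠ v ∧ AbEq x y

/-- `(u, v)` has an internal abelian-border. -/
def HasIntB (u v : List Bool) : Prop := ∃ x y, IsIntBorder u v x y

/-- `(u, v)` has an external abelian-border. -/
def HasExtB (u v : List Bool) : Prop := ∃ x y, IsExtBorder u v x y

/-- `(u, v)` is mutually abelian-bordered. -/
def MAB (u v : List Bool) : Prop := HasIntB u v ∧ HasExtB u v

/-- `(u, v)` is mutually abelian-unbordered. -/
def MAU (u v : List Bool) : Prop := ¬ HasIntB u v ∧ ¬ HasExtB u v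

/-- `lsb u v` is the length of the shortest internal abelian-border of `(u, v)`:
the least `t` with `1 ≤ t ≤ |u| - 1` such that the suffix of `u` of length `t`
is abelian equivalent to the prefix of `v` of length `t`. -/
noncomputable def lsb (u v : List Bool) : ℕ :=
  sInf {t | 1 ≤ t ∧ t ≤ u.length - 1 ∧ AbEq (u.drop (u.length - t)) (v.take t)}

lemma count_tf (l : List Bool) : l.count true + l.count false = l.length := by
  induction l with
  | nil => simp
  | cons h t ih => cases h <;> simp [List.count_cons] <;> omega

lemma abEq_of_count_len {x y : List Bool} (h1 : x.count true = y.count true)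
    (h2 : x.length = y.length) : AbEq x y := by
  refine ⟨h1, ?_⟩
  have hx := count_tf x; have hy := count_tf y; omega

lemma abEq_length {x y : List Bool} (h : AbEq x y) : x.length = y.length := by
  have hx := count_tf x; have hy := count_tf y; obtain ⟨h1, h2⟩ := h; omega

/-- walk across γ: counts of suffix of `γβ` of length `|β|+t` minus prefix of `β'γ'`. -/
def Dfun (γ β β' γ' : List Bool) (t : ℕ) : ℤ :=
  ((γ.drop (γ.length - t)).count true + β.count true : ℤ)
    - (β'.count true + (γ'.take t).count true)

lemma Dfun_step (γ β β' γ' : List Bool) (t : ℕ) (ht : t < γ.length) :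
    Dfun γ β β' γ' t - 1 ≤ Dfun γ β β' γ' (t+1) ∧
      Dfun γ β β' γ' (t+1) ≤ Dfun γ β β' γ' t + 1 := by
  unfold Dfun
  have h1 : γ.drop (γ.length - (t+1)) = γ[γ.length - (t+1)] :: γ.drop (γ.length - t) := by
    rw [List.drop_eq_getElem_cons (by omega)]
    congr 2
    omega
  have h2 : (γ'.take (t+1)).count true ≤ (γ'.take t).count true + 1 ∧
      (γ'.take t).count true ≤ (γ'.take (t+1)).count true := by
    rw [List.take_succ, List.count_append]
    have ha : (γ'[t]?.toList).count true ≤ (γ'[t]?.toList).length := List.count_le_length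
    have hb : (γ'[t]?.toList).length ≤ 1 := by cases γ'[t]? <;> simp
    omega
  rw [h1]
  cases hbit : γ[γ.length - (t+1)] <;> simp [List.count_cons, hbit] <;> push_cast <;> omega

lemma noInt (γ β β' γ' : List Bool) (hβ : β ≠ [])
    (hb : β.length = β'.length) (hg : γ.length = γ'.length)
    (hni : ¬ HasIntB (γ ++ β) (β' ++ γ'))
    (t : ℕ) (ht : t < γ.length) : Dfun γ β β' γ' t ≠ 0 := by
  intro hDz
  apply hni
  refine ⟨γ.drop (γ.length - t) ++ β, β' ++ γ'.take t, ?_, ?_, ?_, ?_, ?_, ?_⟩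
  · simp [hβ]
  · intro h
    have := congrArg List.length h
    simp [List.length_drop, List.length_take] at this
    omega
  · exact ⟨γ.take (γ.length - t), by rw [← List.append_assoc, List.take_append_drop]⟩
  · exact ⟨γ'.drop t, by rw [List.append_assoc, List.take_append_drop]⟩
  · intro h
    have := congrArg List.length h
    simp [List.length_take] at this
    omega
  · apply abEq_of_count_len
    · have : ((γ.drop (γ.length - t) ++ β).count true : ℤ)
          = ((β' ++ γ'.take t).count true : ℤ) := by
        rw [List.count_append, List.count_append]
        unfold Dfun at hDz
        push_cast
        omega
      exact_mod_cast this
    · simp [List.length_drop, List.length_take]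
      omega

lemma noExt (α γ γ' α' : List Bool) (hα : α ≠ [])
    (ha : α.length = α'.length) (hg : γ.length = γ'.length)
    (hne : ¬ HasExtB (α ++ γ) (γ' ++ α'))
    (s : ℕ) (hs : s < γ.length) :
    (α.count true + (γ.take s).count true : ℤ)
      ≠ ((γ'.drop (γ'.length - s)).count true + α'.count true : ℤ) := by
  intro hEz
  apply hne
  refine ⟨α ++ γ.take s, γ'.drop (γ'.length - s) ++ α', ?_, ?_, ?_, ?_, ?_, ?_⟩
  · simp [hα]
  · intro h
    have := congrArg List.length h
    simp [List.length_take] at this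
    omega
  · exact ⟨γ.drop s, by rw [List.append_assoc, List.take_append_drop]⟩
  · exact ⟨γ'.take (γ'.length - s), by rw [← List.append_assoc, List.take_append_drop]⟩
  · intro h
    have := congrArg List.length h
    simp [List.length_drop] at this
    omega
  · apply abEq_of_count_len
    · have : ((α ++ γ.take s).count true : ℤ)
          = ((γ'.drop (γ'.length - s) ++ α').count true : ℤ) := by
        rw [List.count_append, List.count_append]
        push_cast
        omega
      exact_mod_cast this
    · simp [List.length_drop, List.length_take]
      omega

lemma walk (D : ℕ → ℤ) (g : ℕ) (hg2 : 2 ≤ g) (e : ℤ) (he : e = 1 ∨ e = -1)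
    (hD0 : D 0 = e) (hDg : D g = 0)
    (hstep : ∀ t < g, D t - 1 ≤ D (t+1) ∧ D (t+1) ≤ D t + 1)
    (hne0 : ∀ t < g, D t ≠ 0)
    (hnee : ∀ t, 1 ≤ t → t ≤ g → D t ≠ e) : False := by
  have key : ∀ t, 1 ≤ t → t ≤ g - 1 → 2 ≤ e * D t := by
    intro t
    induction t with
    | zero => omega
    | succ s ih =>
      intro _ h2
      have hstep' := hstep s (by omega)
      have hne0' := hne0 (s+1) (by omega)
      have hnee' := hnee (s+1) (by omega) (by omega)
      rcases Nat.eq_zero_or_pos s with hs | hs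
      · subst hs
        rw [hD0] at hstep'
        rcases he with h | h <;> rw [h] at hstep' hnee' ⊢ <;> omega
      · have ih' := ih (by omega) (by omega)
        rcases he with h | h <;> rw [h] at ih' hnee' ⊢ <;> omega
  have hstep' := hstep (g-1) (by omega)
  have hk := key (g-1) (by omega) le_rfl
  rw [show g - 1 + 1 = g from by omega, hDg] at hstep'
  rcases he with h | h <;> rw [h] at hk <;> omega

theorem stmt5_aux (n : ℕ) (hn : 3 ≤ n) (u v : List Bool)
    (hu : u.length = n) (hv : v.length = n)
    (i j : ℕ) (hij : n < i + j)
    (α γ β β' γ' α' : List Bool)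
    (hα : α ≠ []) (hγ : γ ≠ []) (hβ : β ≠ [])
    (hβ' : β' ≠ []) (hγ' : γ' ≠ []) (hα' : α' ≠ [])
    (hud : u = α ++ γ ++ β) (hvd : v = β' ++ γ' ++ α')
    (he1 : AbEq (α ++ γ) (γ' ++ α')) (he2 : AbEq (γ ++ β) (β' ++ γ'))
    (hlj : (α ++ γ).length = j) (hli : (γ ++ β).length = i)
    (hni1 : ¬ HasIntB (γ ++ β) (β' ++ γ'))
    (hne2 : ¬ HasExtB (α ++ γ) (γ' ++ α')) :
    ((∀ c : Bool, ((α.count c : ℤ) - (α'.count c : ℤ)).natAbs = 1) ↔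
      (∀ c : Bool, ((β.count c : ℤ) - (β'.count c : ℤ)).natAbs = 1)) ∧
    ((∀ c : Bool, ((β.count c : ℤ) - (β'.count c : ℤ)).natAbs = 1) ↔
      i + j - n = 1) := by
  have hl1 := abEq_length he1
  have hl2 := abEq_length he2
  obtain ⟨hc1, -⟩ := he1
  obtain ⟨hc2, -⟩ := he2
  rw [List.count_append, List.count_append] at hc1 hc2
  simp only [List.length_append] at hl1 hl2 hlj hli
  rw [hud] at hu; rw [hvd] at hv
  simp only [List.length_append] at hu hv
  have hga : 1 ≤ γ.length := List.length_pos_iff.mpr hγ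
  have hba : 1 ≤ β.length := List.length_pos_iff.mpr hβ
  have haa : 1 ≤ α.length := List.length_pos_iff.mpr hα
  have hg : γ.length = γ'.length := by omega
  have hb : β.length = β'.length := by omega
  have ha : α.length = α'.length := by omega
  -- key count relation
  have hAB : (β.count true : ℤ) - β'.count true = (α.count true : ℤ) - α'.count true := by
    omega
  -- reductions of the ∀c conditions
  have redα : (∀ c : Bool, ((α.count c : ℤ) - (α'.count c : ℤ)).natAbs = 1) ↔
      ((α.count true : ℤ) - α'.count true).natAbs = 1 := by
    constructor
    · intro h; exact h true
    · intro h c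
      cases c
      · have h1 := count_tf α; have h2 := count_tf α'; omega
      · exact h
  have redβ : (∀ c : Bool, ((β.count c : ℤ) - (β'.count c : ℤ)).natAbs = 1) ↔
      ((β.count true : ℤ) - β'.count true).natAbs = 1 := by
    constructor
    · intro h; exact h true
    · intro h c
      cases c
      · have h1 := count_tf β; have h2 := count_tf β'; omega
      · exact h
  -- D facts
  have hD0 : Dfun γ β β' γ' 0 = (β.count true : ℤ) - β'.count true := by
    simp [Dfun]
  have hDg : Dfun γ β β' γ' γ.length = 0 := by
    simp only [Dfun, Nat.sub_self, List.drop_zero, hg, List.take_length]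
    push_cast
    omega
  have hne0 : ∀ t < γ.length, Dfun γ β β' γ' t ≠ 0 :=
    fun t ht => noInt γ β β' γ' hβ hb hg hni1 t ht
  have hnee : ∀ t, 1 ≤ t → t ≤ γ.length →
      Dfun γ β β' γ' t ≠ (α.count true : ℤ) - α'.count true := by
    intro t h1 h2 hcon
    have hx := noExt α γ γ' α' hα ha hg hne2 (γ.length - t) (by omega)
    apply hx
    have e1 : (γ.take (γ.length - t)).count true + (γ.drop (γ.length - t)).count true
        = γ.count true := by
      rw [← List.count_append, List.take_append_drop]
    have e2 : γ'.length - (γ.length - t) = t := by omega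
    rw [e2]
    have e3 : (γ'.take t).count true + (γ'.drop t).count true = γ'.count true := by
      rw [← List.count_append, List.take_append_drop]
    unfold Dfun at hcon
    push_cast
    omega
  have hBne : (β.count true : ℤ) - β'.count true ≠ 0 := by
    have h := hne0 0 (by omega)
    rw [hD0] at h
    exact h
  refine ⟨?_, ?_⟩
  · rw [redα, redβ]; omega
  · rw [redβ]
    have hijg : i + j - n = γ.length := by omega
    rw [hijg]
    constructor
    · intro h1
      by_contra hgne
      have hg2 : 2 ≤ γ.length := by omega
      refine walk (Dfun γ β β' γ') γ.length hg2 ((α.count true : ℤ) - α'.count true)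
        (by omega) (by rw [hD0, hAB]) hDg
        (fun t ht => Dfun_step γ β β' γ' t ht) hne0 hnee
    · intro hg1
      have hGle : γ.count true ≤ γ.length := List.count_le_length
      have hG'le : γ'.count true ≤ γ'.length := List.count_le_length
      omega

theorem stmt_5 (n : ℕ) (hn : 3 ≤ n) (u v : List Bool)
    (hu : u.length = n) (hv : v.length = n) (hmab : MAB u v)
    (i j : ℕ) (hi : i = lsb u v) (hj : j = lsb v u) (hij : n < i + j)
    (α γ β β' γ' α' : List Bool)
    (hα : α ≠ []) (hγ : γ ≠ []) (hβ : β ≠ [])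
    (hβ' : β' ≠ []) (hγ' : γ' ≠ []) (hα' : α' ≠ [])
    (hud : u = α ++ γ ++ β) (hvd : v = β' ++ γ' ++ α')
    (he1 : AbEq (α ++ γ) (γ' ++ α')) (he2 : AbEq (γ ++ β) (β' ++ γ'))
    (hlj : (α ++ γ).length = j) (hli : (γ ++ β).length = i)
    (hm1 : MAU (γ ++ β) (β' ++ γ')) (hm2 : MAU (α ++ γ) (γ' ++ α')) :
    ((∀ c : Bool, ((α.count c : ℤ) - (α'.count c : ℤ)).natAbs = 1) ↔
      (∀ c : Bool, ((β.count c : ℤ) - (β'.count c : ℤ)).natAbs = 1)) ∧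
    ((∀ c : Bool, ((β.count c : ℤ) - (β'.count c : ℤ)).natAbs = 1) ↔
      i + j - n = 1) :=
  stmt5_aux n hn u v hu hv i j hij α γ β β' γ' α' hα hγ hβ hβ' hγ' hα'
    hud hvd he1 he2 hlj hli hm1.1 hm2.2
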